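/- In the setting of the Sperner–Meshulam lemma, there exists for every subset I ⊆ [k] a simplicial (|I|-1)-chain c^I over Z/2 supported on K^I with c^∅ = 1, satisfying ∂c^I = Σ_{i∈I} c^{I\{i}} for all non-empty I (where for |I| = 1 the boundary map is the augmentation). That is, a compatible system of chains certifying the connectivity hypotheses exists. -/

import Mathlib

/-- An (abstract) simplicial complex on vertex set `V`, given as its set of faces:
downward closed and containing the empty face. -/
def IsComplex {V : Type*} (K : Set (Finset V)) : Prop :=
  ∅ ∈ K ∧ ∀ s ∈ K, ∀ t ⊆ s, t ∈ K

/-- The simplicial boundary operator over `ℤ/2`, on the augmented chain complex: a chain is a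
finitely supported function on faces (a face of cardinality `d` has degree `d - 1`; the empty
face spans the degree `-1` part, so that `bd` in degree `0` is the augmentation map). -/
noncomputable def bd {V : Type*} [DecidableEq V] (c : Finset V →₀ ZMod 2) :
    Finset V →₀ ZMod 2 :=
  c.sum fun s a => a • ∑ v ∈ s, Finsupp.single (s.erase v) (1 : ZMod 2)

/-- `c` is a chain of the complex `K` supported on faces of cardinality `d`
(i.e. a simplicial `(d-1)`-chain of `K` over `ℤ/2`). -/
def IsChainOn {V : Type*} (K : Set (Finset V)) (d : ℕ) (c : Finset V →₀ ZMod 2) : Prop :=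
  ∀ s ∈ c.support, s ∈ K ∧ s.card = d

/-- `K` is homologically `m`-connected over `ℤ/2`: its reduced homology vanishes in all
degrees `≤ m` (degree `d - 1` corresponds to faces of cardinality `d`); `(-1)`-connected
means non-empty, and `m ≤ -2` demands nothing. -/
def HomConnected {V : Type*} [DecidableEq V] (K : Set (Finset V)) (m : ℤ) : Prop :=
  ∀ d : ℕ, (d : ℤ) ≤ m + 1 → ∀ c, IsChainOn K d c → bd c = 0 →
    ∃ b, IsChainOn K (d + 1) b ∧ bd b = c

/-!
The chains are built level by level in `|I|`. If `c^J` is already constructed for `|J| ≤ n`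
and `|I| = n + 1`, then `z = Σ_{i ∈ I} c^{I∖{i}}` is an `(n-1)`-chain of `K^I` and a cycle:
`∂z = Σ_{i ≠ j} c^{I∖{i,j}}`, in which every term occurs twice, or `∂z = ∂c^∅ = 0` when `n = 0`.
Since `K^I` is `(n-1)`-connected, `z` bounds, and any filling may serve as `c^I`.
-/

open Finset

section Chains

variable {V : Type*}

theorem IsChainOn.mono {K L : Set (Finset V)} {d : ℕ} {c : Finset V →₀ ZMod 2}
    (hc : IsChainOn K d c) (hKL : K ⊆ L) : IsChainOn L d c :=
  fun s hs => ⟨hKL (hc s hs).1, (hc s hs).2⟩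

theorem IsChainOn.sum {K : Set (Finset V)} {d : ℕ} {ι : Type*} {s : Finset ι}
    {f : ι → Finset V →₀ ZMod 2} (hf : ∀ i ∈ s, IsChainOn K d (f i)) :
    IsChainOn K d (∑ i ∈ s, f i) := by
  classical
  intro t ht
  obtain ⟨i, hi, hti⟩ := mem_biUnion.mp (Finsupp.support_finsetSum ht)
  exact hf i hi t hti

variable [DecidableEq V]

theorem bd_add (x y : Finset V →₀ ZMod 2) : bd (x + y) = bd x + bd y := by
  unfold bd
  apply Finsupp.sum_add_index' <;> intros <;> simp [add_smul]

theorem bd_sum {ι : Type*} (s : Finset ι) (f : ι → Finset V →₀ ZMod 2) :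
    bd (∑ i ∈ s, f i) = ∑ i ∈ s, bd (f i) :=
  map_sum (AddMonoidHom.mk' bd bd_add) f s

@[simp]
theorem bd_single_empty : bd (Finsupp.single (∅ : Finset V) (1 : ZMod 2)) = 0 := by
  simp [bd, Finsupp.sum_single_index]

end Chains

theorem sum_sum_erase_erase_eq_zero {ι M : Type*} [DecidableEq ι] [AddCommGroup M]
    [Module (ZMod 2) M] (f : Finset ι → M) (I : Finset ι) :
    ∑ i ∈ I, ∑ j ∈ I.erase i, f ((I.erase i).erase j) = 0 := by
  have add_self : ∀ x : M, x + x = 0 := fun x => by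
    rw [← two_smul (ZMod 2), show (2 : ZMod 2) = 0 from rfl, zero_smul]
  rw [sum_sigma']
  refine sum_involution (fun a _ => ⟨a.2, a.1⟩) ?_ ?_ ?_ (fun _ _ => rfl)
  · intro a _
    rw [erase_right_comm]
    exact add_self _
  · intro a ha _ hswap
    exact ne_of_mem_erase (mem_sigma.mp ha).2 (congrArg Sigma.fst hswap)
  · intro a ha
    obtain ⟨hi, hj⟩ := mem_sigma.mp ha
    exact mem_sigma.mpr ⟨mem_of_mem_erase hj,
      mem_erase.mpr ⟨(ne_of_mem_erase hj).symm, hi⟩⟩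

section Compatible

variable {ι V : Type*} [DecidableEq ι] [DecidableEq V]

def IsCompatibleUpTo (K : Finset ι → Set (Finset V)) (n : ℕ)
    (c : Finset ι → Finset V →₀ ZMod 2) : Prop :=
  c ∅ = Finsupp.single ∅ 1 ∧
  (∀ I, #I ≤ n → IsChainOn (K I) #I (c I)) ∧
  ∀ I : Finset ι, I.Nonempty → #I ≤ n → bd (c I) = ∑ i ∈ I, c (I.erase i)

variable {K : Finset ι → Set (Finset V)} {n : ℕ} {c : Finset ι → Finset V →₀ ZMod 2}

theorem isCompatibleUpTo_zero (hK : ∅ ∈ K ∅) :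
    IsCompatibleUpTo K 0 (fun _ => Finsupp.single ∅ 1) := by
  refine ⟨rfl, ?_, fun I hI hI0 => absurd (card_eq_zero.mp (Nat.le_zero.mp hI0)) hI.ne_empty⟩
  intro I hI s hs
  obtain rfl := card_eq_zero.mp (Nat.le_zero.mp hI)
  obtain rfl := mem_singleton.mp (Finsupp.support_single_subset hs)
  exact ⟨hK, rfl⟩

namespace IsCompatibleUpTo

theorem isChainOn_sum_erase (hc : IsCompatibleUpTo K n c)
    (hmono : ∀ I J, I ⊆ J → K I ⊆ K J) {I : Finset ι} (hI : #I = n + 1) :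
    IsChainOn (K I) n (∑ i ∈ I, c (I.erase i)) := by
  refine IsChainOn.sum fun i hi => ?_
  have hcard : #(I.erase i) = n := by rw [card_erase_of_mem hi, hI, Nat.add_sub_cancel]
  exact hcard ▸ (hc.2.1 _ hcard.le).mono (hmono _ _ (erase_subset i I))

theorem bd_sum_erase_eq_zero (hc : IsCompatibleUpTo K n c) {I : Finset ι}
    (hI : #I = n + 1) : bd (∑ i ∈ I, c (I.erase i)) = 0 := by
  rcases Nat.eq_zero_or_pos n with rfl | hn
  · obtain ⟨i, rfl⟩ := card_eq_one.mp hI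
    simp [hc.1]
  · have hface : ∀ i ∈ I, bd (c (I.erase i)) = ∑ j ∈ I.erase i, c ((I.erase i).erase j) := by
      intro i hi
      have hcard : #(I.erase i) = n := by rw [card_erase_of_mem hi, hI, Nat.add_sub_cancel]
      exact hc.2.2 _ (card_pos.mp (hcard ▸ hn)) hcard.le
    rw [bd_sum, sum_congr rfl hface, sum_sum_erase_erase_eq_zero]

theorem exists_succ (hc : IsCompatibleUpTo K n c) (hmono : ∀ I J, I ⊆ J → K I ⊆ K J)
    (hconn : ∀ I, HomConnected (K I) ((#I : ℤ) - 2)) :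
    ∃ c', IsCompatibleUpTo K (n + 1) c' := by
  have hfill : ∀ I : Finset ι, #I = n + 1 →
      ∃ b, IsChainOn (K I) (n + 1) b ∧ bd b = ∑ i ∈ I, c (I.erase i) := fun I hI =>
    hconn I n (by rw [hI]; push_cast; omega) _ (hc.isChainOn_sum_erase hmono hI)
      (hc.bd_sum_erase_eq_zero hI)
  choose b hb_chain hb_bd using hfill
  have hlower : ∀ I : Finset ι, #I ≤ n → (if h : #I = n + 1 then b I h else c I) = c I :=
    fun I hI => dif_neg (by omega)
  refine ⟨fun I => if h : #I = n + 1 then b I h else c I, ?_, fun I hI => ?_, fun I hne hI => ?_⟩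
  · exact (hlower ∅ (Nat.zero_le n)).trans hc.1
  · by_cases h : #I = n + 1
    · dsimp only
      rw [dif_pos h, h]
      exact hb_chain I h
    · simpa only [dif_neg h] using hc.2.1 I (by omega)
  · have herase : ∀ i ∈ I, (if h : #(I.erase i) = n + 1 then b _ h else c (I.erase i)) =
        c (I.erase i) := fun i hi => hlower _ (by rw [card_erase_of_mem hi]; omega)
    simp only [sum_congr rfl herase]
    by_cases h : #I = n + 1
    · simpa only [dif_pos h] using hb_bd I h
    · simpa only [dif_neg h] using hc.2.2 I hne (by omega)

end IsCompatibleUpTo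

theorem exists_isCompatibleUpTo (hK : ∅ ∈ K ∅) (hmono : ∀ I J, I ⊆ J → K I ⊆ K J)
    (hconn : ∀ I, HomConnected (K I) ((#I : ℤ) - 2)) (n : ℕ) :
    ∃ c, IsCompatibleUpTo K n c := by
  induction n with
  | zero => exact ⟨_, isCompatibleUpTo_zero hK⟩
  | succ n ih =>
    obtain ⟨c, hc⟩ := ih
    exact hc.exists_succ hmono hconn

end Compatible

theorem sperner_meshulam_chains_general {V : Type*} [DecidableEq V] (k : ℕ)
    (K : Finset (Fin k) → Set (Finset V))
    (hcx : ∀ I, IsComplex (K I))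
    (hmono : ∀ I J : Finset (Fin k), I ⊆ J → K I ⊆ K J)
    (hconn : ∀ I : Finset (Fin k), HomConnected (K I) ((I.card : ℤ) - 2)) :
    ∃ c : Finset (Fin k) → (Finset V →₀ ZMod 2),
      c ∅ = Finsupp.single ∅ 1 ∧
      (∀ I, IsChainOn (K I) I.card (c I)) ∧
      (∀ I : Finset (Fin k), I.Nonempty → bd (c I) = ∑ i ∈ I, c (I.erase i)) := by
  obtain ⟨c, hc_empty, hc_chain, hc_bd⟩ := exists_isCompatibleUpTo (hcx ∅).1 hmono hconn k
  have hcard (I : Finset (Fin k)) : #I ≤ k := (card_le_univ I).trans_eq (Fintype.card_fin k)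
  exact ⟨c, hc_empty, fun I => hc_chain I (hcard I), fun I hI => hc_bd I hI (hcard I)⟩

/-- In the setting of the Sperner–Meshulam lemma there is a compatible system
of chains: `(|I|-1)`-chains `c^I` over `ℤ/2` supported on `K^I`, with `c^∅ = 1` (the generator
in degree `-1`) and `∂c^I = Σ_{i ∈ I} c^{I∖{i}}` for every non-empty `I` (the boundary in
degree `0` being the augmentation). -/
theorem sperner_meshulam_chains {V : Type*} [DecidableEq V] (k : ℕ) (hk : 0 < k)
    (K : Finset (Fin k) → Set (Finset V))
    (hcx : ∀ I, IsComplex (K I))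
    (hmono : ∀ I J : Finset (Fin k), I ⊆ J → K I ⊆ K J)
    (hconn : ∀ I : Finset (Fin k), HomConnected (K I) ((I.card : ℤ) - 2)) :
    ∃ c : Finset (Fin k) → (Finset V →₀ ZMod 2),
      c ∅ = Finsupp.single ∅ 1 ∧
      (∀ I, IsChainOn (K I) I.card (c I)) ∧
      (∀ I : Finset (Fin k), I.Nonempty → bd (c I) = ∑ i ∈ I, c (I.erase i)) :=
  sperner_meshulam_chains_general k K hcx hmono hconn
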